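/- Let A > 0, B > 0, K_P ≥ 0, K_I > 0, r be real numbers, and suppose F, z : ℝ → ℝ are differentiable functions satisfying for all t ≥ 0: z'(t) = r - F(t) and F'(t) = -B·F(t) + A·(K_P·(r - F(t)) + K_I·z(t)). Then there exist constants C ≥ 0 and λ > 0 such that |F(t) - r| ≤ C·e^{-λ t} for all t ≥ 0. -/

import Mathlib

/-!
In the coordinates `e = F - r`, `w = z - B r / (A K_I)` the closed loop is the damped oscillator
`e' = -a e + b w`, `w' = -e` with `a = B + A K_P > 0` and `b = A K_I > 0`. Its energy
`e² / 2 + b w² / 2` only dissipates like `-a e²`, so it is tilted by a cross term: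
`V = e² / 2 + b w² / 2 - ε e w` satisfies `V' ≤ -ε V` and `e² ≤ 4 V` for
`ε = 2ab / (a² + 3b)`. Hence `V` decays like `exp (-ε t)` and `|e|` like `exp (-ε t / 2)`.
-/

open Real Set

theorem le_mul_exp_of_hasDerivAt_le_neg_mul {f f' : ℝ → ℝ} {ε : ℝ}
    (hf : ∀ t, 0 ≤ t → HasDerivAt f (f' t) t) (hf' : ∀ t, 0 ≤ t → f' t ≤ -ε * f t)
    {t : ℝ} (ht : 0 ≤ t) : f t ≤ f 0 * exp (-ε * t) := by
  have hg : ∀ s, 0 ≤ s → HasDerivAt (fun u => f u * exp (ε * u))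
      (f' s * exp (ε * s) + f s * (exp (ε * s) * ε)) s := fun s hs =>
    (hf s hs).mul (by simpa using ((hasDerivAt_id s).const_mul ε).exp)
  have hanti : AntitoneOn (fun s => f s * exp (ε * s)) (Ici 0) := by
    refine antitoneOn_of_hasDerivWithinAt_nonpos (convex_Ici 0)
      (f' := fun s => f' s * exp (ε * s) + f s * (exp (ε * s) * ε))
      (fun s hs => (hg s hs).continuousAt.continuousWithinAt) (fun s hs => ?_) (fun s hs => ?_)
    · rw [interior_Ici] at hs
      exact (hg s (le_of_lt hs)).hasDerivWithinAt
    · rw [interior_Ici] at hs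
      have := hf' s (le_of_lt hs)
      nlinarith [exp_pos (ε * s)]
  have hdecay := hanti self_mem_Ici ht ht
  simp only [mul_zero, exp_zero, mul_one] at hdecay
  calc f t = f t * exp (ε * t) * exp (-ε * t) := by
        rw [mul_assoc, ← exp_add]; simp
    _ ≤ f 0 * exp (-ε * t) := by gcongr

namespace DampedOscillator

variable {a b ε : ℝ}

noncomputable def lyapunov (b ε x y : ℝ) : ℝ := x ^ 2 / 2 + b * y ^ 2 / 2 - ε * (x * y)

noncomputable def decayRate (a b : ℝ) : ℝ := 2 * a * b / (a ^ 2 + 3 * b)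

theorem decayRate_pos (ha : 0 < a) (hb : 0 < b) : 0 < decayRate a b := by
  unfold decayRate; positivity

theorem decayRate_mul (hb : 0 < b) : decayRate a b * (a ^ 2 + 3 * b) = 2 * a * b := by
  unfold decayRate; field_simp

theorem sq_le_four_mul_lyapunov (ha : 0 < a) (hb : 0 < b) (x y : ℝ) :
    x ^ 2 ≤ 4 * lyapunov b (decayRate a b) x y := by
  set ε := decayRate a b
  have hε := decayRate_mul (a := a) hb
  have hε_sq : 3 * ε ^ 2 ≤ b := by
    have hamgm : 12 * a ^ 2 * b ≤ (a ^ 2 + 3 * b) ^ 2 := by nlinarith [sq_nonneg (a ^ 2 - 3 * b)]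
    have : 4 * a ^ 2 * b * (3 * ε ^ 2) ≤ 4 * a ^ 2 * b * b := by
      calc 4 * a ^ 2 * b * (3 * ε ^ 2) = ε ^ 2 * (12 * a ^ 2 * b) := by ring
        _ ≤ ε ^ 2 * (a ^ 2 + 3 * b) ^ 2 := by gcongr
        _ = 4 * a ^ 2 * b * b := by rw [← mul_pow, hε]; ring
    exact le_of_mul_le_mul_left this (by positivity)
  unfold lyapunov
  nlinarith [sq_nonneg (x - 2 * ε * y), sq_nonneg y]

theorem hasDerivAt_lyapunov {e w : ℝ → ℝ} {t : ℝ} (he : HasDerivAt e (-a * e t + b * w t) t)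
    (hw : HasDerivAt w (-e t) t) :
    HasDerivAt (fun s => lyapunov b ε (e s) (w s))
      (-(a - ε) * e t ^ 2 + ε * a * (e t * w t) - ε * b * w t ^ 2) t := by
  refine ((((he.pow 2).div_const 2).add (((hw.pow 2).const_mul b).div_const 2)).sub
    ((he.mul hw).const_mul ε)).congr_deriv ?_
  ring

theorem lyapunov_deriv_le (ha : 0 < a) (hb : 0 < b) (x y : ℝ) :
    -(a - decayRate a b) * x ^ 2 + decayRate a b * a * (x * y) - decayRate a b * b * y ^ 2
      ≤ -decayRate a b * lyapunov b (decayRate a b) x y := by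
  set ε := decayRate a b
  have hε := decayRate_mul (a := a) hb
  have hε_pos : 0 < ε := decayRate_pos ha hb
  have hε_le : 3 * ε ≤ 2 * a := by nlinarith [sq_nonneg a]
  -- complete the square in `y`; the `x²` remainder is fixed by `ε (a² + 3b) = 2ab`
  have key : 2 * b * (-(a - ε) * x ^ 2 + ε * a * (x * y) - ε * b * y ^ 2 + ε * lyapunov b ε x y)
      = -ε * (b * y - (a - ε) * x) ^ 2 - ε ^ 2 * (2 * a - ε) * x ^ 2 := by
    unfold lyapunov; linear_combination x ^ 2 * hε
  have h2a : 0 ≤ 2 * a - ε := by linarith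
  have hneg : -ε * (b * y - (a - ε) * x) ^ 2 - ε ^ 2 * (2 * a - ε) * x ^ 2 ≤ 0 := by
    have : 0 ≤ ε * (b * y - (a - ε) * x) ^ 2 := by positivity
    have : 0 ≤ ε ^ 2 * (2 * a - ε) * x ^ 2 := by positivity
    linarith
  have hsum : -(a - ε) * x ^ 2 + ε * a * (x * y) - ε * b * y ^ 2 + ε * lyapunov b ε x y ≤ 0 :=
    nonpos_of_mul_nonpos_right (key ▸ hneg) (by positivity)
  linarith

theorem abs_le_exp_of_hasDerivAt (ha : 0 < a) (hb : 0 < b) {e w : ℝ → ℝ}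
    (he : ∀ t, 0 ≤ t → HasDerivAt e (-a * e t + b * w t) t)
    (hw : ∀ t, 0 ≤ t → HasDerivAt w (-e t) t) {t : ℝ} (ht : 0 ≤ t) :
    |e t| ≤ √(4 * lyapunov b (decayRate a b) (e 0) (w 0)) * exp (-(decayRate a b / 2) * t) := by
  set V := fun s => lyapunov b (decayRate a b) (e s) (w s)
  have hV : V t ≤ V 0 * exp (-decayRate a b * t) :=
    le_mul_exp_of_hasDerivAt_le_neg_mul (fun s hs => hasDerivAt_lyapunov (he s hs) (hw s hs))
      (fun s _ => lyapunov_deriv_le ha hb (e s) (w s)) ht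
  have hV₀ : 0 ≤ V 0 := by nlinarith [sq_le_four_mul_lyapunov ha hb (e 0) (w 0)]
  calc |e t| ≤ √(4 * V 0 * exp (-decayRate a b * t)) := by
        apply abs_le_sqrt
        nlinarith [sq_le_four_mul_lyapunov ha hb (e t) (w t)]
    _ = √(4 * V 0) * exp (-(decayRate a b / 2) * t) := by
        rw [sqrt_mul (by positivity), ← exp_half]; ring_nf

end DampedOscillator

/-- Exponential convergence of the thrust tracking error: since the closed-loop
characteristic polynomial s² + (B + K_P·A)s + K_I·A is Hurwitz, there exist
C ≥ 0 and λ > 0 with |F(t) - r| ≤ C·exp(-λ·t) for all t ≥ 0. -/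
theorem pi_exponential_convergence
    (A B K_P K_I r : ℝ) (hA : 0 < A) (hB : 0 < B) (hKP : 0 ≤ K_P) (hKI : 0 < K_I)
    (F z : ℝ → ℝ) (hFd : Differentiable ℝ F) (hzd : Differentiable ℝ z)
    (hz : ∀ t, 0 ≤ t → deriv z t = r - F t)
    (hF : ∀ t, 0 ≤ t → deriv F t = -B * F t + A * (K_P * (r - F t) + K_I * z t)) :
    ∃ C : ℝ, 0 ≤ C ∧ ∃ l : ℝ, 0 < l ∧
      ∀ t, 0 ≤ t → |F t - r| ≤ C * Real.exp (-l * t) := by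
  set a := B + A * K_P
  set b := A * K_I
  have ha : 0 < a := by positivity
  have hb : 0 < b := by positivity
  have he : ∀ t, 0 ≤ t →
      HasDerivAt (fun s => F s - r) (-a * (F t - r) + b * (z t - B * r / b)) t := by
    intro t ht
    refine ((hFd t).hasDerivAt.sub_const r).congr_deriv ?_
    rw [hF t ht]; field_simp; ring
  have hw : ∀ t, 0 ≤ t → HasDerivAt (fun s => z s - B * r / b) (-(F t - r)) t := by
    intro t ht
    refine ((hzd t).hasDerivAt.sub_const _).congr_deriv ?_
    rw [hz t ht]; ring
  exact ⟨_, sqrt_nonneg _, _, half_pos (DampedOscillator.decayRate_pos ha hb),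
    fun t ht => DampedOscillator.abs_le_exp_of_hasDerivAt ha hb he hw ht⟩
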